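/- arXiv:2108.13727 — 3 statements merged into one kernel-verified Lean document; each statement's English description precedes it below -/
import Mathlib

section
/- Let n = 3, q > −1 with p := 2q+3, β ∈ ℝ, and let (u,v) be a classical radial solution of −Δu = |u|^{2q+2}u + β|v|^{q+2}|u|^q u, −Δv = |v|^{2q+2}v + β|u|^{q+2}|v|^q v in ℝ³. Write 𝒰(r) = (u(r),v(r)) for the radial profiles and G(𝒰) := (1/(p+1))(|u|^{p+1} + |v|^{p+1} + 2β|uv|^{(p+1)/2}). Then for every R > 0 the Rellich–Pohozaev identity holds: ∫₀^R (5−p) G(𝒰(r)) r² dr = R³( 2G(𝒰(R)) + |𝒰'(R)|² + (1/R) 𝒰(R)·𝒰'(R) ), where 𝒰'(R)=(u'(R),v'(R)), |𝒰'|² = u'² + v'² and 𝒰·𝒰' = uu' + vv'. -/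
open Set

noncomputable section

/-- The Laplacian of `u : ℝ³ → ℝ`, as the sum of the pure second derivatives. -/
def laplacian (u : EuclideanSpace ℝ (Fin 3) → ℝ) (x : EuclideanSpace ℝ (Fin 3)) : ℝ :=
  ∑ i : Fin 3, iteratedFDeriv ℝ 2 u x ![EuclideanSpace.single i (1 : ℝ), EuclideanSpace.single i (1 : ℝ)]

/-- The nonlinearity `|a|^{2q+2} a + β |b|^{q+2} |a|^q a`. -/
def Fnl (q β a b : ℝ) : ℝ := |a| ^ (2 * q + 2) * a + β * |b| ^ (q + 2) * |a| ^ q * a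

/-- The potential `G(u,v) = (1/(p+1)) (|u|^{p+1} + |v|^{p+1} + 2β|uv|^{(p+1)/2})`. -/
def Gpot (p β a b : ℝ) : ℝ :=
  (1 / (p + 1)) * (|a| ^ (p + 1) + |b| ^ (p + 1) + 2 * β * |a * b| ^ ((p + 1) / 2))

/-!
Along the ray `t ↦ t • e₀` a radial solution gives profiles `w, z : ℝ → ℝ`, smooth on all of `ℝ`.
A radial function `u` with profile `w` has second derivative `w'(r)/r` at `r • e₀` in every
direction orthogonal to `e₀` (differentiate `u (r • e₀ + s • f) = w (√(r² + s²))` twice at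
`s = 0`), so the system becomes `w'' + (2/r) w' = -F(w, z)`, `z'' + (2/r) z' = -F(z, w)` for
`r > 0`. The nonlinearity is the gradient of `G`, which is homogeneous of degree `p + 1`, so
`F(a, b) a + F(b, a) b = (p + 1) G(a, b)`. With these two facts the Pohozaev function
`H(r) = r³ (2 G + w'² + z'²) + r² (w w' + z z')` satisfies `H' = (5 - p) G r²` on `r > 0`, and
`H(0) = 0`; the identity is the fundamental theorem of calculus for `H` on `[0, R]`.
-/

theorem abs_rpow_mul_self_mul_self {c : ℝ} (hc : c + 2 ≠ 0) (a : ℝ) :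
    |a| ^ c * a * a = |a| ^ (c + 2) := by
  rcases eq_or_ne a 0 with rfl | ha
  · simp [Real.zero_rpow hc]
  · rw [Real.rpow_add (abs_pos.2 ha), Real.rpow_two, sq_abs]
    ring

theorem Gpot_two_mul_add_three (q β a b : ℝ) :
    Gpot (2 * q + 3) β a b = (2 * q + 4)⁻¹ *
      (|a| ^ (2 * q + 4) + |b| ^ (2 * q + 4) + 2 * β * (|a| ^ (q + 2) * |b| ^ (q + 2))) := by
  rw [Gpot, one_div, show 2 * q + 3 + 1 = 2 * q + 4 by ring,
    show (2 * q + 4) / 2 = q + 2 by ring, abs_mul, Real.mul_rpow (abs_nonneg a) (abs_nonneg b)]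

theorem Fnl_mul_add_Fnl_mul {q : ℝ} (hq : -1 < q) (β a b : ℝ) :
    Fnl q β a b * a + Fnl q β b a * b = (2 * q + 4) * Gpot (2 * q + 3) β a b := by
  have hc : 2 * q + 2 + 2 = 2 * q + 4 := by ring
  have ha := abs_rpow_mul_self_mul_self (c := 2 * q + 2) (by linarith) a
  have hb := abs_rpow_mul_self_mul_self (c := 2 * q + 2) (by linarith) b
  have ha' := abs_rpow_mul_self_mul_self (c := q) (by linarith) a
  have hb' := abs_rpow_mul_self_mul_self (c := q) (by linarith) b
  rw [hc] at ha hb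
  rw [Gpot_two_mul_add_three, ← mul_assoc, mul_inv_cancel₀ (by linarith), one_mul, Fnl, Fnl]
  linear_combination ha + hb + β * |b| ^ (q + 2) * ha' + β * |a| ^ (q + 2) * hb'

theorem HasDerivAt.gpot {q : ℝ} (hq : -1 < q) (β : ℝ) {w z : ℝ → ℝ} {w' z' r : ℝ}
    (hw : HasDerivAt w w' r) (hz : HasDerivAt z z' r) :
    HasDerivAt (fun r => Gpot (2 * q + 3) β (w r) (z r))
      (Fnl q β (w r) (z r) * w' + Fnl q β (z r) (w r) * z') r := by
  have habs {c : ℝ} (hc : 1 < c) {y : ℝ → ℝ} {y' : ℝ} (hy : HasDerivAt y y' r) :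
      HasDerivAt (fun r => |y r| ^ c) (c * |y r| ^ (c - 2) * y r * y') r := by
    have := (hasDerivAt_norm_rpow (y r) hc).comp r hy
    simp only [Real.norm_eq_abs, Function.comp_def] at this
    exact this
  have h4 : 1 < 2 * q + 4 := by linarith
  have h2 : 1 < q + 2 := by linarith
  simp_rw [Gpot_two_mul_add_three]
  refine (((habs h4 hw).add (habs h4 hz)).add
    (((habs h2 hw).mul (habs h2 hz)).const_mul (2 * β))).const_mul _ |>.congr_deriv ?_
  rw [Fnl, Fnl, show 2 * q + 4 - 2 = 2 * q + 2 by ring, show q + 2 - 2 = q by ring]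
  field_simp
  ring

section Pohozaev

variable {q β : ℝ} {w z : ℝ → ℝ}

def pohozaevFn (q β : ℝ) (w z : ℝ → ℝ) (r : ℝ) : ℝ :=
  r ^ 3 * (2 * Gpot (2 * q + 3) β (w r) (z r) + deriv w r ^ 2 + deriv z r ^ 2)
    + r ^ 2 * (w r * deriv w r + z r * deriv z r)

theorem hasDerivAt_pohozaevFn (hq : -1 < q) {r : ℝ} (hr : r ≠ 0)
    (hw : DifferentiableAt ℝ w r) (hw' : DifferentiableAt ℝ (deriv w) r)
    (hz : DifferentiableAt ℝ z r) (hz' : DifferentiableAt ℝ (deriv z) r)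
    (hw_ode : deriv (deriv w) r + 2 / r * deriv w r = -Fnl q β (w r) (z r))
    (hz_ode : deriv (deriv z) r + 2 / r * deriv z r = -Fnl q β (z r) (w r)) :
    HasDerivAt (pohozaevFn q β w z)
      ((5 - (2 * q + 3)) * Gpot (2 * q + 3) β (w r) (z r) * r ^ 2) r := by
  have hw := hw.hasDerivAt
  have hz := hz.hasDerivAt
  have hw' := hw'.hasDerivAt
  have hz' := hz'.hasDerivAt
  have hG := hw.gpot hq β hz
  have hdot := Fnl_mul_add_Fnl_mul hq β (w r) (z r)
  refine (((hasDerivAt_pow 3 r).mul (((hG.const_mul 2).add (hw'.pow 2)).add (hz'.pow 2))).add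
    ((hasDerivAt_pow 2 r).mul ((hw.mul hw').add (hz.mul hz')))).congr_deriv ?_
  have hw2 : deriv (deriv w) r = -Fnl q β (w r) (z r) - 2 / r * deriv w r := by linarith
  have hz2 : deriv (deriv z) r = -Fnl q β (z r) (w r) - 2 / r * deriv z r := by linarith
  simp only [Pi.add_apply, Pi.mul_apply, Pi.pow_apply, hw2, hz2]
  field_simp
  linear_combination (-r ^ 2) * hdot

theorem differentiable_pohozaevFn (hq : -1 < q)
    (hw : Differentiable ℝ w) (hw' : Differentiable ℝ (deriv w))
    (hz : Differentiable ℝ z) (hz' : Differentiable ℝ (deriv z)) :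
    Differentiable ℝ (pohozaevFn q β w z) := fun r => by
  have hG := ((hw r).hasDerivAt.gpot (β := β) hq (hz r).hasDerivAt).differentiableAt
  unfold pohozaevFn
  fun_prop

theorem integral_eq_pohozaevFn (hq : -1 < q)
    (hw : Differentiable ℝ w) (hw' : Differentiable ℝ (deriv w))
    (hz : Differentiable ℝ z) (hz' : Differentiable ℝ (deriv z))
    (hw_ode : ∀ r > 0, deriv (deriv w) r + 2 / r * deriv w r = -Fnl q β (w r) (z r))
    (hz_ode : ∀ r > 0, deriv (deriv z) r + 2 / r * deriv z r = -Fnl q β (z r) (w r))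
    {R : ℝ} (hR : 0 ≤ R) :
    ∫ r in (0 : ℝ)..R, (5 - (2 * q + 3)) * Gpot (2 * q + 3) β (w r) (z r) * r ^ 2
      = pohozaevFn q β w z R := by
  have hG : Continuous fun r => Gpot (2 * q + 3) β (w r) (z r) :=
    continuous_iff_continuousAt.2 fun r =>
      ((hw r).hasDerivAt.gpot hq β (hz r).hasDerivAt).continuousAt
  have hH0 : pohozaevFn q β w z 0 = 0 := by simp [pohozaevFn]
  have hint : Continuous fun r => (5 - (2 * q + 3)) * Gpot (2 * q + 3) β (w r) (z r) * r ^ 2 := by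
    fun_prop
  rw [intervalIntegral.integral_eq_sub_of_hasDeriv_right_of_le hR
    (differentiable_pohozaevFn hq hw hw' hz hz').continuous.continuousOn
    (fun r hr => (hasDerivAt_pohozaevFn hq hr.1.ne' (hw r) (hw' r) (hz r) (hz' r)
      (hw_ode r hr.1) (hz_ode r hr.1)).hasDerivWithinAt)
    (hint.intervalIntegrable 0 R), hH0, sub_zero]

end Pohozaev

section Line

variable {E F : Type*} [NormedAddCommGroup E] [NormedSpace ℝ E]
  [NormedAddCommGroup F] [NormedSpace ℝ F] {u : E → F} {x v : E} {s : ℝ}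

theorem hasDerivAt_comp_add_smul (hu : DifferentiableAt ℝ u (x + s • v)) :
    HasDerivAt (fun t : ℝ => u (x + t • v)) (fderiv ℝ u (x + s • v) v) s := by
  have hline : HasDerivAt (fun t : ℝ => x + t • v) v s := by
    simpa using ((hasDerivAt_id s).smul_const v).const_add x
  exact hu.hasFDerivAt.comp_hasDerivAt s hline

theorem hasDerivAt_fderiv_comp_add_smul (hu : DifferentiableAt ℝ (fderiv ℝ u) (x + s • v)) :
    HasDerivAt (fun t : ℝ => fderiv ℝ u (x + t • v) v)
      (fderiv ℝ (fderiv ℝ u) (x + s • v) v v) s :=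
  (hasDerivAt_comp_add_smul hu).clm_apply (hasDerivAt_const s v) |>.congr_deriv (by simp)

end Line

section Radial

variable {E : Type*} [NormedAddCommGroup E] [InnerProductSpace ℝ E]
  {u : E → ℝ} {u₀ : ℝ → ℝ} {e f : E}

def lineProfile (u : E → ℝ) (e : E) (t : ℝ) : ℝ := u (t • e)

theorem lineProfile_eq_of_radial (hurad : ∀ x, u x = u₀ ‖x‖) (he : ‖e‖ = 1) {t : ℝ} (ht : 0 ≤ t) :
    lineProfile u e t = u₀ t := by
  rw [lineProfile, hurad, norm_smul, he, mul_one, Real.norm_of_nonneg ht]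

theorem deriv_eq_deriv_lineProfile_of_radial (hurad : ∀ x, u x = u₀ ‖x‖) (he : ‖e‖ = 1)
    {t : ℝ} (ht : 0 < t) :
    deriv u₀ t = deriv (lineProfile u e) t :=
  Filter.EventuallyEq.deriv_eq <| by
    filter_upwards [Ioi_mem_nhds ht] with s hs
    exact (lineProfile_eq_of_radial hurad he (le_of_lt hs)).symm

theorem hasDerivAt_lineProfile {t : ℝ} (hu : DifferentiableAt ℝ u (t • e)) :
    HasDerivAt (lineProfile u e) (fderiv ℝ u (t • e) e) t := by
  have := hasDerivAt_comp_add_smul (x := 0) (v := e) (by rwa [zero_add])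
  simp only [zero_add] at this
  exact this

theorem differentiable_lineProfile (hu : Differentiable ℝ u) :
    Differentiable ℝ (lineProfile u e) :=
  fun t => (hasDerivAt_lineProfile (hu (t • e))).differentiableAt

theorem hasDerivAt_deriv_lineProfile (hu : ContDiff ℝ 2 u) (t : ℝ) :
    HasDerivAt (deriv (lineProfile u e)) (fderiv ℝ (fderiv ℝ u) (t • e) e e) t := by
  have hu' : Differentiable ℝ (fderiv ℝ u) :=
    (hu.fderiv_right (m := 1) (by norm_num)).differentiable (by norm_num)
  have hderiv : deriv (lineProfile u e) = fun t => fderiv ℝ u (t • e) e :=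
    funext fun s => (hasDerivAt_lineProfile ((hu.differentiable (by norm_num)) _)).deriv
  have := hasDerivAt_fderiv_comp_add_smul (x := 0) (v := e) (s := t)
    (by rw [zero_add]; exact hu' _)
  simp only [zero_add] at this
  rwa [hderiv]

theorem differentiable_deriv_lineProfile (hu : ContDiff ℝ 2 u) :
    Differentiable ℝ (deriv (lineProfile u e)) :=
  fun t => (hasDerivAt_deriv_lineProfile hu t).differentiableAt

theorem hasDerivAt_sqrt_sq_add_sq {r : ℝ} (hr : r ≠ 0) (s : ℝ) :
    HasDerivAt (fun s : ℝ => √(r ^ 2 + s ^ 2)) (s / √(r ^ 2 + s ^ 2)) s := by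
  have hpos : 0 < r ^ 2 + s ^ 2 := by positivity
  refine (((hasDerivAt_pow 2 s).const_add (r ^ 2)).sqrt hpos.ne').congr_deriv ?_
  field_simp
  norm_num

theorem fderiv_fderiv_apply_of_radial (hu : ContDiff ℝ 2 u) (hurad : ∀ x, u x = u₀ ‖x‖)
    (he : ‖e‖ = 1) (hf : ‖f‖ = 1) (hef : inner ℝ e f = 0) {r : ℝ} (hr : 0 < r) :
    fderiv ℝ (fderiv ℝ u) (r • e) f f = deriv (lineProfile u e) r / r := by
  set w := lineProfile u e
  set ρ : ℝ → ℝ := fun s => √(r ^ 2 + s ^ 2)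
  have hρ0 : ρ 0 = r := by simp [ρ, Real.sqrt_sq hr.le]
  have hnorm (s : ℝ) : ‖r • e + s • f‖ = ρ s := by
    have horth : inner ℝ (r • e) (s • f) = 0 := by simp [inner_smul_left, inner_smul_right, hef]
    have hsq : ‖r • e + s • f‖ ^ 2 = r ^ 2 + s ^ 2 := by
      rw [sq, norm_add_sq_eq_norm_sq_add_norm_sq_real horth, norm_smul, norm_smul, he, hf,
        Real.norm_eq_abs, Real.norm_eq_abs]
      simp only [mul_one, ← sq, sq_abs]
    rw [show ρ s = √(r ^ 2 + s ^ 2) from rfl, ← hsq, Real.sqrt_sq (norm_nonneg _)]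
  have hline (s : ℝ) : u (r • e + s • f) = w (ρ s) := by
    rw [hurad, hnorm]
    exact (lineProfile_eq_of_radial hurad he (Real.sqrt_nonneg _)).symm
  have hfirst : (fun s => fderiv ℝ u (r • e + s • f) f) = fun s => deriv w (ρ s) * (s / ρ s) := by
    funext s
    refine (hasDerivAt_comp_add_smul ((hu.differentiable (by norm_num)) _)).unique ?_
    simp_rw [hline]
    exact (differentiable_lineProfile (hu.differentiable (by norm_num)) _).hasDerivAt.comp s
      (hasDerivAt_sqrt_sq_add_sq hr.ne' s)
  have hsecond := hasDerivAt_fderiv_comp_add_smul (x := r • e) (v := f) (s := 0)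
    (((hu.fderiv_right (m := 1) (by norm_num)).differentiable (by norm_num)) _)
  rw [hfirst, zero_smul, add_zero] at hsecond
  refine hsecond.unique ?_
  have hquot : HasDerivAt (fun s => s / ρ s) (1 / r) 0 := by
    refine ((hasDerivAt_id 0).div (hasDerivAt_sqrt_sq_add_sq hr.ne' 0)
      (by positivity)).congr_deriv ?_
    rw [show √(r ^ 2 + 0 ^ 2) = r from hρ0]
    field_simp
    ring
  have hw' : HasDerivAt (fun s => deriv w (ρ s)) (deriv (deriv w) (ρ 0) * (0 / ρ 0)) 0 :=
    (differentiable_deriv_lineProfile hu _).hasDerivAt.comp 0 (hasDerivAt_sqrt_sq_add_sq hr.ne' 0)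
  refine (hw'.mul hquot).congr_deriv ?_
  simp [hρ0, div_eq_mul_inv]

end Radial

theorem laplacian_of_radial {u : EuclideanSpace ℝ (Fin 3) → ℝ} {u₀ : ℝ → ℝ}
    (hu : ContDiff ℝ 2 u) (hurad : ∀ x, u x = u₀ ‖x‖) {r : ℝ} (hr : 0 < r) :
    laplacian u (r • EuclideanSpace.single 0 1) =
      deriv (deriv (lineProfile u (EuclideanSpace.single 0 1))) r
        + 2 / r * deriv (lineProfile u (EuclideanSpace.single 0 1)) r := by
  have hunit (i : Fin 3) : ‖(EuclideanSpace.single i 1 : EuclideanSpace ℝ (Fin 3))‖ = 1 := by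
    simp
  have hperp (i : Fin 3) (hi : i ≠ 0) :=
    fderiv_fderiv_apply_of_radial hu hurad (hunit 0) (hunit i)
      (by simp [EuclideanSpace.inner_single_left, hi]) hr
  simp only [laplacian, Fin.sum_univ_three, iteratedFDeriv_two_apply, Matrix.cons_val_zero,
    Matrix.cons_val_one]
  rw [hperp 1 (by decide), hperp 2 (by decide), (hasDerivAt_deriv_lineProfile hu r).deriv]
  ring

/-- Rellich–Pohozaev identity for classical radial solutions of the system in `ℝ³`:
`∫₀^R (5-p) G(𝒰(r)) r² dr
  = R³ (2 G(𝒰(R)) + |𝒰'(R)|² + (1/R) 𝒰(R)·𝒰'(R))` for every `R > 0`. -/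
theorem stmt13 (q β p : ℝ) (hq : -1 < q) (hpdef : p = 2 * q + 3)
    (u v : EuclideanSpace ℝ (Fin 3) → ℝ) (u₀ v₀ : ℝ → ℝ)
    (hurad : ∀ x, u x = u₀ ‖x‖) (hvrad : ∀ x, v x = v₀ ‖x‖)
    (hu2 : ContDiff ℝ 2 u) (hv2 : ContDiff ℝ 2 v)
    (hequ : ∀ x, -laplacian u x = Fnl q β (u x) (v x))
    (heqv : ∀ x, -laplacian v x = Fnl q β (v x) (u x)) :
    ∀ R : ℝ, 0 < R →
      (∫ r in (0:ℝ)..R, (5 - p) * Gpot p β (u₀ r) (v₀ r) * r ^ 2)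
        = R ^ 3 * (2 * Gpot p β (u₀ R) (v₀ R)
            + ((deriv u₀ R) ^ 2 + (deriv v₀ R) ^ 2)
            + (1 / R) * (u₀ R * deriv u₀ R + v₀ R * deriv v₀ R)) := by
  intro R hR
  subst hpdef
  have he : ‖(EuclideanSpace.single 0 1 : EuclideanSpace ℝ (Fin 3))‖ = 1 := by simp
  have hw_ode (r : ℝ) (hr : r > 0) := (laplacian_of_radial hu2 hurad hr).symm.trans
    (neg_eq_iff_eq_neg.mp (hequ _))
  have hz_ode (r : ℝ) (hr : r > 0) := (laplacian_of_radial hv2 hvrad hr).symm.trans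
    (neg_eq_iff_eq_neg.mp (heqv _))
  have hpohozaev := integral_eq_pohozaevFn hq
    (differentiable_lineProfile (hu2.differentiable (by norm_num)))
    (differentiable_deriv_lineProfile hu2)
    (differentiable_lineProfile (hv2.differentiable (by norm_num)))
    (differentiable_deriv_lineProfile hv2) hw_ode hz_ode hR.le
  rw [intervalIntegral.integral_congr fun r hr => ?_, hpohozaev, pohozaevFn,
    deriv_eq_deriv_lineProfile_of_radial hurad he hR,
    deriv_eq_deriv_lineProfile_of_radial hvrad he hR,
    lineProfile_eq_of_radial hurad he hR.le, lineProfile_eq_of_radial hvrad he hR.le]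
  · field_simp
    ring
  · rw [uIcc_of_le hR.le] at hr
    rw [lineProfile_eq_of_radial hurad he hr.1, lineProfile_eq_of_radial hvrad he hr.1]
end
end

section
/- Let n = 3, p ∈ (3,5), a := 2(p−3)/(p−1) and b := 2(p−3)/(p−1)², and let (u,v) be a classical radial solution of the system −Δu = |u|^{2q+2}u + β|v|^{q+2}|u|^q u, −Δv = |v|^{2q+2}v + β|u|^{q+2}|v|^q v in ℝ³, where p = 2q+3. Set U(r) := r^{2/(p−1)} u(r), V(r) := r^{2/(p−1)} v(r), φ(r) := U'(r)² + V'(r)², and E(r) := −(b/2)(U(r)² + V(r)²) + (1/(p+1))(|U(r)|^{p+1} + |V(r)|^{p+1}) + (2β/(p+1))|U(r)V(r)|^{(p+1)/2}. Then for all 0 < r < ρ the energy identity holds: ½(ρ²φ(ρ) − r²φ(r)) − (1−a)∫_r^ρ s φ(s) ds + E(ρ) − E(r) = 0. -/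
/-!
For a radial function `u = f ∘ ‖·‖` on `ℝ³` the Laplacian is `f'' + (2/r) f'`, so the profiles
`f, g` of `(u, v)` solve `f'' + (2/r) f' + Fnl(f, g) = 0` on `(0, ∞)`. Since `Fnl` is homogeneous of
degree `p = 2q + 3`, the substitution `U = r^α f` with `α = 2/(p-1)` turns this into the
Emden–Fowler type equation `r² U'' + a r U' - b U + Fnl(U, V) = 0`. Multiplying by `U'` (and the
`V`-equation by `V'`) shows that `r²(U'² + V'²)/2 + E` has derivative `(1-a) r (U'² + V'²)`, where
`E` is the potential whose gradient is `(Fnl(U, V) - bU, Fnl(V, U) - bV)`; the energy identity is the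
fundamental theorem of calculus for this.
-/

open Set

noncomputable section

open Filter Topology

section Radial

variable {E : Type*} [NormedAddCommGroup E] [InnerProductSpace ℝ E]

theorem hasFDerivAt_norm_of_ne_zero {x : E} (hx : x ≠ 0) :
    HasFDerivAt (‖·‖) (‖x‖⁻¹ • innerSL ℝ x) x := by
  have h := (hasStrictFDerivAt_norm_sq x).hasFDerivAt.sqrt (by positivity)
  simp only [Real.sqrt_sq (norm_nonneg _)] at h
  convert h using 1
  ext y
  simp only [smul_apply, coe_innerSL_apply, smul_eq_mul, two_smul, add_apply]
  field_simp
  ring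

theorem hasFDerivAt_radial {f : ℝ → ℝ} {x : E} (hx : x ≠ 0) (hf : DifferentiableAt ℝ f ‖x‖) :
    HasFDerivAt (fun y => f ‖y‖) ((deriv f ‖x‖ / ‖x‖) • innerSL ℝ x) x := by
  have h := hf.hasDerivAt.comp_hasFDerivAt x (hasFDerivAt_norm_of_ne_zero hx)
  rwa [smul_smul, ← div_eq_mul_inv] at h

theorem iteratedFDeriv_two_radial_apply {f : ℝ → ℝ} (hf : Differentiable ℝ f) {x : E}
    (hx : x ≠ 0) (hf' : DifferentiableAt ℝ (deriv f) ‖x‖) (w : E) :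
    iteratedFDeriv ℝ 2 (fun y => f ‖y‖) x ![w, w] =
      deriv f ‖x‖ / ‖x‖ * ‖w‖ ^ 2
        + (deriv (deriv f) ‖x‖ / ‖x‖ ^ 2 - deriv f ‖x‖ / ‖x‖ ^ 3) * inner ℝ x w ^ 2 := by
  set r := ‖x‖
  have hr : r ≠ 0 := norm_ne_zero_iff.mpr hx
  have hc : HasFDerivAt (fun y : E => deriv f ‖y‖ / ‖y‖)
      (((deriv (deriv f) r * id r - deriv f r * 1) / id r ^ 2) • (r⁻¹ • innerSL ℝ x)) x :=
    (hf'.hasDerivAt.div (hasDerivAt_id r) hr).comp_hasFDerivAt x (hasFDerivAt_norm_of_ne_zero hx)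
  have hfderiv : fderiv ℝ (fun y => f ‖y‖) =ᶠ[𝓝 x]
      fun y => (deriv f ‖y‖ / ‖y‖) • innerSL ℝ y := by
    filter_upwards [isOpen_ne.mem_nhds hx] with y hy
    exact (hasFDerivAt_radial hy (hf _)).fderiv
  rw [iteratedFDeriv_two_apply, hfderiv.fderiv_eq, (hc.fun_smul (innerSL ℝ).hasFDerivAt).fderiv]
  simp only [id_eq, mul_one, Matrix.cons_val_zero, add_apply, smul_apply,
    ContinuousLinearMap.smulRight_apply, coe_innerSL_apply, real_inner_comm w x, smul_eq_mul,
    Matrix.cons_val_one, r]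
  rw [show innerSL ℝ x w = inner ℝ w x from real_inner_comm _ _,
    show innerSL ℝ w w = ‖w‖ ^ 2 from real_inner_self_eq_norm_sq _]
  field_simp

end Radial

theorem laplacian_radial {f : ℝ → ℝ} (hf : Differentiable ℝ f) {x : EuclideanSpace ℝ (Fin 3)}
    (hx : x ≠ 0) (hf' : DifferentiableAt ℝ (deriv f) ‖x‖) :
    laplacian (fun y => f ‖y‖) x = deriv (deriv f) ‖x‖ + 2 / ‖x‖ * deriv f ‖x‖ := by
  have hsum : ∑ i : Fin 3, inner ℝ x (EuclideanSpace.single i (1 : ℝ)) ^ 2 = ‖x‖ ^ 2 := by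
    simp [EuclideanSpace.real_norm_sq_eq, EuclideanSpace.inner_single_right]
  have hr : ‖x‖ ≠ 0 := norm_ne_zero_iff.mpr hx
  simp only [laplacian, iteratedFDeriv_two_radial_apply hf hx hf', Finset.sum_add_distrib,
    ← Finset.mul_sum, hsum, PiLp.norm_single, norm_one, one_pow, Finset.sum_const,
    Finset.card_univ, Fintype.card_fin, nsmul_eq_mul, Nat.cast_ofNat, mul_one]
  field_simp
  ring

section Profile

variable {F : Type*} [SeminormedAddCommGroup F] [NormedSpace ℝ F] {u : F → ℝ} {u₀ : ℝ → ℝ}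

theorem radial_apply_smul (hrad : ∀ x, u x = u₀ ‖x‖) {e : F} (he : ‖e‖ = 1) {t : ℝ}
    (ht : 0 ≤ t) : u (t • e) = u₀ t := by
  rw [hrad, norm_smul, he, mul_one, Real.norm_of_nonneg ht]

theorem radial_eq_comp_norm (hrad : ∀ x, u x = u₀ ‖x‖) {e : F} (he : ‖e‖ = 1) :
    u = fun y => u (‖y‖ • e) :=
  funext fun y => by rw [hrad y, radial_apply_smul hrad he (norm_nonneg y)]

end Profile

theorem radial_profile_ode {q β : ℝ} {u v : EuclideanSpace ℝ (Fin 3) → ℝ} {f g : ℝ → ℝ}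
    (hf : ContDiff ℝ 2 f) (hu : u = fun y => f ‖y‖) (hv : v = fun y => g ‖y‖)
    (heq : ∀ x, -laplacian u x = Fnl q β (u x) (v x)) {s : ℝ} (hs : 0 < s) :
    deriv (deriv f) s + 2 / s * deriv f s + Fnl q β (f s) (g s) = 0 := by
  have hx : ‖EuclideanSpace.single (0 : Fin 3) s‖ = s := by simp [hs.le]
  have h := heq (EuclideanSpace.single 0 s)
  rw [hu, hv, laplacian_radial (hf.differentiable (by norm_num)) (by simp [hs.ne'])
    (hf.differentiable_deriv_two _)] at h
  simp only [hx] at h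
  linarith

theorem abs_rpow_add_two {q : ℝ} (hq : q + 2 ≠ 0) (x : ℝ) : |x| ^ (q + 2) = |x| ^ q * x ^ 2 := by
  rw [Real.rpow_add' (abs_nonneg x) hq, Real.rpow_two, sq_abs]

theorem Fnl_mul {q : ℝ} (β : ℝ) {c : ℝ} (hc : 0 < c) (x y : ℝ) :
    Fnl q β (c * x) (c * y) = c ^ (2 * q + 2) * c * Fnl q β x y := by
  have hsplit : c ^ (2 * q + 2) = c ^ (q + 2) * c ^ q := by
    rw [← Real.rpow_add hc]; ring_nf
  simp only [Fnl, abs_mul, abs_of_pos hc, Real.mul_rpow hc.le (abs_nonneg _), hsplit]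
  ring

theorem hasDerivAt_rpow_mul {α s f' : ℝ} {f : ℝ → ℝ} (hs : 0 < s) (hf : HasDerivAt f f' s) :
    HasDerivAt (fun t => t ^ α * f t) (s ^ α * (α / s * f s + f')) s := by
  refine ((Real.hasDerivAt_rpow_const (p := α) (Or.inl hs.ne')).mul hf).congr_deriv ?_
  rw [Real.rpow_sub_one hs.ne']
  ring

/-- In the paper's notation, `E(r) = potential p b β (U r) (V r)`. -/
def potential (p b β x y : ℝ) : ℝ :=
  -(b / 2) * (x ^ 2 + y ^ 2) + (1 / (p + 1)) * (|x| ^ (p + 1) + |y| ^ (p + 1))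
    + (2 * β / (p + 1)) * |x * y| ^ ((p + 1) / 2)

section Rescaled

variable {p q β a b α : ℝ}

theorem rescale_ode_identity (hpq : p = 2 * q + 3) (hp : p ≠ 1) (hα : α = 2 / (p - 1))
    (ha : a = 2 * (p - 3) / (p - 1)) (hb : b = 2 * (p - 3) / (p - 1) ^ 2)
    {s : ℝ} (hs : 0 < s) (x y x' x'' : ℝ) :
    s ^ 2 * (s ^ α * (α / s * (α / s * x + x') + (-(α / s ^ 2) * x + α / s * x' + x'')))
        + a * s * (s ^ α * (α / s * x + x')) - b * (s ^ α * x)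
        + Fnl q β (s ^ α * x) (s ^ α * y)
      = s ^ α * s ^ 2 * (x'' + 2 / s * x' + Fnl q β x y) := by
  have hp1 : p - 1 ≠ 0 := sub_ne_zero.mpr hp
  have hpow : (s ^ α) ^ (2 * q + 2) = s ^ 2 := by
    rw [← Real.rpow_mul hs.le, ← Real.rpow_two, hα, show 2 * q + 2 = p - 1 by linarith,
      div_mul_cancel₀ _ hp1]
  rw [Fnl_mul β (Real.rpow_pos_of_pos hs α), hpow, ha, hb, hα]
  field_simp
  ring

theorem rescaled_ode (hpq : p = 2 * q + 3) (hp : p ≠ 1) (hα : α = 2 / (p - 1))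
    (ha : a = 2 * (p - 3) / (p - 1)) (hb : b = 2 * (p - 3) / (p - 1) ^ 2)
    {f g U V : ℝ → ℝ} (hf : ContDiff ℝ 2 f)
    (hode : ∀ s > 0, deriv (deriv f) s + 2 / s * deriv f s + Fnl q β (f s) (g s) = 0)
    (hUf : ∀ s > 0, U s = s ^ α * f s) (hVg : ∀ s > 0, V s = s ^ α * g s) :
    (∀ s > 0, HasDerivAt U (deriv U s) s) ∧
      ∀ s > 0, ∃ U'', HasDerivAt (deriv U) U'' s ∧
        s ^ 2 * U'' + a * s * deriv U s - b * U s + Fnl q β (U s) (V s) = 0 := by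
  have hU : ∀ s > 0, HasDerivAt U (s ^ α * (α / s * f s + deriv f s)) s := fun s hs =>
    (hasDerivAt_rpow_mul hs ((hf.differentiable (by norm_num)) s).hasDerivAt).congr_of_eventuallyEq
      (eventually_of_mem (Ioi_mem_nhds hs) hUf)
  have hderiv : ∀ s > 0, deriv U s = s ^ α * (α / s * f s + deriv f s) := fun s hs =>
    (hU s hs).deriv
  refine ⟨fun s hs => hderiv s hs ▸ hU s hs, fun s hs => ?_⟩
  have hD : HasDerivAt (fun t => α / t * f t + deriv f t)
      (-(α / s ^ 2) * f s + α / s * deriv f s + deriv (deriv f) s) s := by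
    refine ((((hasDerivAt_const s α).div (hasDerivAt_id s) hs.ne').mul
      ((hf.differentiable (by norm_num)) s).hasDerivAt).add
      (hf.differentiable_deriv_two s).hasDerivAt).congr_deriv ?_
    simp only [Pi.div_apply, id]
    field_simp
    ring
  refine ⟨_, (hasDerivAt_rpow_mul hs hD).congr_of_eventuallyEq
    (eventually_of_mem (Ioi_mem_nhds hs) hderiv), ?_⟩
  rw [hderiv s hs, hUf s hs, hVg s hs, rescale_ode_identity hpq hp hα ha hb hs, hode s hs,
    mul_zero]

end Rescaled

section Energy

variable {p q β a b : ℝ}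

theorem hasDerivAt_potential (hpq : p = 2 * q + 3) (hp : 1 < p) {U V : ℝ → ℝ} {U' V' s : ℝ}
    (hU : HasDerivAt U U' s) (hV : HasDerivAt V V' s) :
    HasDerivAt (fun t => potential p b β (U t) (V t))
      ((Fnl q β (U s) (V s) - b * U s) * U' + (Fnl q β (V s) (U s) - b * V s) * V') s := by
  have hquad := ((hU.pow 2).add (hV.pow 2)).const_mul (-(b / 2))
  have hpow := ((((hasDerivAt_abs_rpow (U s) (by linarith : 1 < p + 1)).comp s hU).add
    ((hasDerivAt_abs_rpow (V s) (by linarith : 1 < p + 1)).comp s hV)).const_mul (1 / (p + 1)))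
  have hcoupling := ((hasDerivAt_abs_rpow (U s * V s) (by linarith : 1 < (p + 1) / 2)).comp s
    (hU.mul hV)).const_mul (2 * β / (p + 1))
  refine ((hquad.add hpow).add hcoupling).congr_deriv ?_
  have hq2 : q + 2 ≠ 0 := by linarith
  rw [show p + 1 - 2 = 2 * q + 2 by linarith, show (p + 1) / 2 - 2 = q by linarith,
    show (p + 1) / 2 = q + 2 by linarith, abs_mul, Real.mul_rpow (abs_nonneg _) (abs_nonneg _)]
  simp only [Fnl, abs_rpow_add_two hq2]
  subst hpq
  field_simp
  ring

theorem hasDerivAt_energy (hpq : p = 2 * q + 3) (hp : 1 < p) {U V U' V' : ℝ → ℝ} {s U'' V'' : ℝ}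
    (hU : HasDerivAt U (U' s) s) (hV : HasDerivAt V (V' s) s)
    (hU' : HasDerivAt U' U'' s) (hV' : HasDerivAt V' V'' s)
    (hodeU : s ^ 2 * U'' + a * s * U' s - b * U s + Fnl q β (U s) (V s) = 0)
    (hodeV : s ^ 2 * V'' + a * s * V' s - b * V s + Fnl q β (V s) (U s) = 0) :
    HasDerivAt (fun t => t ^ 2 / 2 * (U' t ^ 2 + V' t ^ 2) + potential p b β (U t) (V t))
      ((1 - a) * (s * (U' s ^ 2 + V' s ^ 2))) s := by
  have hkin := ((hasDerivAt_pow 2 s).div_const 2).mul ((hU'.pow 2).add (hV'.pow 2))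
  refine (hkin.add (hasDerivAt_potential hpq hp hU hV)).congr_deriv ?_
  simp only [Pi.add_apply, Pi.pow_apply]
  linear_combination U' s * hodeU + V' s * hodeV

theorem energy_identity (hpq : p = 2 * q + 3) (hp : 1 < p) {U V U' V' : ℝ → ℝ}
    (hU : ∀ s > 0, HasDerivAt U (U' s) s) (hV : ∀ s > 0, HasDerivAt V (V' s) s)
    (hU' : ∀ s > 0, ∃ U'', HasDerivAt U' U'' s ∧
      s ^ 2 * U'' + a * s * U' s - b * U s + Fnl q β (U s) (V s) = 0)
    (hV' : ∀ s > 0, ∃ V'', HasDerivAt V' V'' s ∧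
      s ^ 2 * V'' + a * s * V' s - b * V s + Fnl q β (V s) (U s) = 0)
    {r ρ : ℝ} (hr : 0 < r) (hrρ : r ≤ ρ) :
    (1 - a) * ∫ s in r..ρ, s * (U' s ^ 2 + V' s ^ 2) =
      (ρ ^ 2 / 2 * (U' ρ ^ 2 + V' ρ ^ 2) + potential p b β (U ρ) (V ρ))
        - (r ^ 2 / 2 * (U' r ^ 2 + V' r ^ 2) + potential p b β (U r) (V r)) := by
  have hpos : ∀ s ∈ uIcc r ρ, 0 < s := fun s hs =>
    hr.trans_le (by rw [uIcc_of_le hrρ] at hs; exact hs.1)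
  rw [← intervalIntegral.integral_const_mul (1 - a) fun s => s * (U' s ^ 2 + V' s ^ 2)]
  refine intervalIntegral.integral_eq_sub_of_hasDerivAt
    (f := fun t => t ^ 2 / 2 * (U' t ^ 2 + V' t ^ 2) + potential p b β (U t) (V t))
    (fun s hs => ?_) ?_
  · obtain ⟨U'', hU'', hodeU⟩ := hU' s (hpos s hs)
    obtain ⟨V'', hV'', hodeV⟩ := hV' s (hpos s hs)
    exact hasDerivAt_energy hpq hp (hU s (hpos s hs)) (hV s (hpos s hs)) hU'' hV'' hodeU hodeV
  · refine ContinuousOn.intervalIntegrable fun s hs => ContinuousAt.continuousWithinAt ?_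
    obtain ⟨U'', hU'', -⟩ := hU' s (hpos s hs)
    obtain ⟨V'', hV'', -⟩ := hV' s (hpos s hs)
    have := hU''.continuousAt
    have := hV''.continuousAt
    fun_prop

end Energy

theorem stmt15_general (q β p a b : ℝ) (hpdef : p = 2 * q + 3) (hp3 : 3 < p)
    (ha : a = 2 * (p - 3) / (p - 1)) (hb : b = 2 * (p - 3) / (p - 1) ^ 2)
    (u v : EuclideanSpace ℝ (Fin 3) → ℝ) (u₀ v₀ : ℝ → ℝ)
    (hurad : ∀ x, u x = u₀ ‖x‖) (hvrad : ∀ x, v x = v₀ ‖x‖)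
    (hu2 : ContDiff ℝ 2 u) (hv2 : ContDiff ℝ 2 v)
    (hequ : ∀ x, -laplacian u x = Fnl q β (u x) (v x))
    (heqv : ∀ x, -laplacian v x = Fnl q β (v x) (u x))
    (U V φ En : ℝ → ℝ)
    (hU : ∀ r > (0 : ℝ), U r = r ^ (2 / (p - 1)) * u₀ r)
    (hV : ∀ r > (0 : ℝ), V r = r ^ (2 / (p - 1)) * v₀ r)
    (hφ : ∀ r > (0 : ℝ), φ r = (deriv U r) ^ 2 + (deriv V r) ^ 2)
    (hEn : ∀ r > (0 : ℝ), En r = -(b / 2) * ((U r) ^ 2 + (V r) ^ 2)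
        + (1 / (p + 1)) * (|U r| ^ (p + 1) + |V r| ^ (p + 1))
        + (2 * β / (p + 1)) * |U r * V r| ^ ((p + 1) / 2)) :
    ∀ r ρ : ℝ, 0 < r → r < ρ →
      (1 / 2) * (ρ ^ 2 * φ ρ - r ^ 2 * φ r) - (1 - a) * (∫ s in r..ρ, s * φ s)
        + En ρ - En r = 0 := by
  intro r ρ hr hrρ
  have hp : 1 < p := by linarith
  set e : EuclideanSpace ℝ (Fin 3) := EuclideanSpace.single 0 1
  have he : ‖e‖ = 1 := by simp [e]
  -- `u₀` is only pinned down on `[0, ∞)`; the even profile `t ↦ u (t • e)` is `C²` on all of `ℝ`.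
  set f : ℝ → ℝ := fun t => u (t • e)
  set g : ℝ → ℝ := fun t => v (t • e)
  have hf : ContDiff ℝ 2 f := hu2.comp (contDiff_id.smul contDiff_const)
  have hg : ContDiff ℝ 2 g := hv2.comp (contDiff_id.smul contDiff_const)
  have hu : u = fun y => f ‖y‖ := radial_eq_comp_norm hurad he
  have hv : v = fun y => g ‖y‖ := radial_eq_comp_norm hvrad he
  have hUf : ∀ s > 0, U s = s ^ (2 / (p - 1)) * f s := fun s hs => by
    rw [hU s hs, ← radial_apply_smul hurad he hs.le]
  have hVg : ∀ s > 0, V s = s ^ (2 / (p - 1)) * g s := fun s hs => by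
    rw [hV s hs, ← radial_apply_smul hvrad he hs.le]
  obtain ⟨hU', hU''⟩ := rescaled_ode hpdef hp.ne' rfl ha hb hf
    (fun s hs => radial_profile_ode hf hu hv hequ hs) hUf hVg
  obtain ⟨hV', hV''⟩ := rescaled_ode hpdef hp.ne' rfl ha hb hg
    (fun s hs => radial_profile_ode hg hv hu heqv hs) hVg hUf
  have key := energy_identity hpdef hp hU' hV' hU'' hV'' hr hrρ.le
  have hint : ∫ s in r..ρ, s * φ s = ∫ s in r..ρ, s * (deriv U s ^ 2 + deriv V s ^ 2) :=
    intervalIntegral.integral_congr fun s hs => by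
      rw [hφ s (hr.trans_le (by rw [uIcc_of_le hrρ.le] at hs; exact hs.1))]
  rw [hint, hφ ρ (hr.trans hrρ), hφ r hr, hEn ρ (hr.trans hrρ), hEn r hr]
  simp only [potential] at key
  linarith

/-- Energy identity for the rescaled profiles `U(r) = r^{2/(p-1)} u(r)`,
`V(r) = r^{2/(p-1)} v(r)` of a classical radial solution in `ℝ³`, `p = 2q+3 ∈ (3,5)`:
with `a = 2(p-3)/(p-1)`, `b = 2(p-3)/(p-1)²`, `φ = (U')² + (V')²` and
`E = -(b/2)(U²+V²) + (1/(p+1))(|U|^{p+1}+|V|^{p+1}) + (2β/(p+1))|UV|^{(p+1)/2}`,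
one has `½(ρ²φ(ρ) - r²φ(r)) - (1-a)∫_r^ρ s φ(s) ds + E(ρ) - E(r) = 0` for `0 < r < ρ`. -/
theorem stmt15 (q β p a b : ℝ) (hpdef : p = 2 * q + 3) (hp3 : 3 < p) (hp5 : p < 5)
    (ha : a = 2 * (p - 3) / (p - 1)) (hb : b = 2 * (p - 3) / (p - 1) ^ 2)
    (u v : EuclideanSpace ℝ (Fin 3) → ℝ) (u₀ v₀ : ℝ → ℝ)
    (hurad : ∀ x, u x = u₀ ‖x‖) (hvrad : ∀ x, v x = v₀ ‖x‖)
    (hu2 : ContDiff ℝ 2 u) (hv2 : ContDiff ℝ 2 v)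
    (hequ : ∀ x, -laplacian u x = Fnl q β (u x) (v x))
    (heqv : ∀ x, -laplacian v x = Fnl q β (v x) (u x))
    (U V φ En : ℝ → ℝ)
    (hU : ∀ r > (0 : ℝ), U r = r ^ (2 / (p - 1)) * u₀ r)
    (hV : ∀ r > (0 : ℝ), V r = r ^ (2 / (p - 1)) * v₀ r)
    (hφ : ∀ r > (0 : ℝ), φ r = (deriv U r) ^ 2 + (deriv V r) ^ 2)
    (hEn : ∀ r > (0 : ℝ), En r = -(b / 2) * ((U r) ^ 2 + (V r) ^ 2)
        + (1 / (p + 1)) * (|U r| ^ (p + 1) + |V r| ^ (p + 1))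
        + (2 * β / (p + 1)) * |U r * V r| ^ ((p + 1) / 2)) :
    ∀ r ρ : ℝ, 0 < r → r < ρ →
      (1 / 2) * (ρ ^ 2 * φ ρ - r ^ 2 * φ r) - (1 - a) * (∫ s in r..ρ, s * φ s)
        + En ρ - En r = 0 :=
  stmt15_general q β p a b hpdef hp3 ha hb u v u₀ v₀ hurad hvrad hu2 hv2 hequ heqv U V φ En hU hV hφ
    hEn
end
end

section
/- Let a ∈ (0,1), b > 0 and R₀ ≥ 0. Suppose V ∈ C²((R₀,∞)) is positive and bounded and satisfies r²V''(r) + a r V'(r) − b V(r) + F(r) = 0 on (R₀,∞), where F : (R₀,∞) → ℝ satisfies F(r) ≤ 0 for all r > R₀. Then V'(r) < 0 for every r > R₀, and lim_{r→∞} V(r) = 0. -/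
/-!
The quantity `W = r ^ a * V'` satisfies `W' = r ^ (a - 2) * (b * V - F) > 0`, so `W` is strictly
increasing. If `V'` were nonnegative somewhere, `W` would eventually exceed some `c > 0`, so
`V' ≥ c * r ^ (-a)` and `V` would grow like `r ^ (1 - a)`, contradicting boundedness. Hence
`V' < 0`. If `V` stayed above some `ε > 0`, then `W' ≥ b * ε * r ^ (a - 2)`, which together with
`W < 0` forces `W ≤ -k * r ^ (a - 1)` with `k = b * ε / (1 - a)`, i.e. `V' ≤ -k / r`; then `V` decreases at least like
`-k * log r`, contradicting positivity.
-/

open Set Filter Topology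

theorem hasDerivAt_rpow_mul_s16 {u : ℝ → ℝ} {u' r : ℝ} (a : ℝ) (hr : 0 < r) (hu : HasDerivAt u u' r) :
    HasDerivAt (fun x => x ^ a * u x) (r ^ (a - 2) * (r ^ 2 * u' + a * r * u r)) r := by
  refine ((Real.hasDerivAt_rpow_const (p := a) (Or.inl hr.ne')).mul hu).congr_deriv ?_
  simp only [Real.rpow_sub hr, Real.rpow_two, Real.rpow_one]
  field_simp
  ring

theorem monotoneOn_sub_of_hasDerivAt_le {s : Set ℝ} {f g f' g' : ℝ → ℝ} (hs : Convex ℝ s)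
    (hf : ∀ x ∈ s, HasDerivAt f (f' x) x) (hg : ∀ x ∈ s, HasDerivAt g (g' x) x)
    (hle : ∀ x ∈ interior s, g' x ≤ f' x) :
    MonotoneOn (fun x => f x - g x) s := by
  have hfg : ∀ x ∈ s, HasDerivAt (fun x => f x - g x) (f' x - g' x) x :=
    fun x hx => (hf x hx).sub (hg x hx)
  refine monotoneOn_of_hasDerivWithinAt_nonneg hs
    (fun x hx => (hfg x hx).continuousAt.continuousWithinAt)
    (fun x hx => (hfg x (interior_subset hx)).hasDerivWithinAt) fun x hx => ?_
  linarith [hle x hx]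

theorem tendsto_atTop_of_hasDerivAt_ge {f g f' g' : ℝ → ℝ} {r₀ : ℝ}
    (hf : ∀ x ∈ Ici r₀, HasDerivAt f (f' x) x) (hg : ∀ x ∈ Ici r₀, HasDerivAt g (g' x) x)
    (hle : ∀ x ∈ Ioi r₀, g' x ≤ f' x) (hg_top : Tendsto g atTop atTop) :
    Tendsto f atTop atTop := by
  have hmono := monotoneOn_sub_of_hasDerivAt_le (convex_Ici r₀) hf hg (by rwa [interior_Ici])
  refine tendsto_atTop_mono' atTop ?_ (tendsto_atTop_add_const_right _ (f r₀ - g r₀) hg_top)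
  filter_upwards [eventually_ge_atTop r₀] with x hx
  linarith [hmono self_mem_Ici hx hx]

theorem MonotoneOn.nonpos_of_le_of_tendsto {h u : ℝ → ℝ} {R₀ : ℝ} (hh : MonotoneOn h (Ioi R₀))
    (hle : ∀ x ∈ Ioi R₀, h x ≤ u x) (hu : Tendsto u atTop (𝓝 0)) :
    ∀ x ∈ Ioi R₀, h x ≤ 0 := by
  intro x hx
  refine ge_of_tendsto hu ?_
  filter_upwards [eventually_ge_atTop x] with y hy
  exact (hh hx (hx.out.trans_le hy) hy).trans (hle y (hx.out.trans_le hy))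

theorem tendsto_nhds_zero_of_antitoneOn {V : ℝ → ℝ} {R₀ : ℝ} (hV : AntitoneOn V (Ioi R₀))
    (hnonneg : ∀ r ∈ Ioi R₀, 0 ≤ V r) (hsmall : ∀ ε > 0, ∃ r ∈ Ioi R₀, V r < ε) :
    Tendsto V atTop (𝓝 0) := by
  refine tendsto_order.2 ⟨fun e he => ?_, fun e he => ?_⟩
  · filter_upwards [eventually_gt_atTop R₀] with r hr
    exact he.trans_le (hnonneg r hr)
  · obtain ⟨r₁, hr₁, hV₁⟩ := hsmall e he
    filter_upwards [eventually_ge_atTop r₁] with r hr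
    exact (hV hr₁ (hr₁.out.trans_le hr) hr).trans_lt hV₁

/-- The bound is the antiderivative of `κ * r ^ (a - 2)` that vanishes at infinity. -/
theorem le_neg_mul_rpow_of_nonpos {W W' : ℝ → ℝ} {a κ R₀ : ℝ} (hR₀ : 0 ≤ R₀) (ha : a < 1)
    (hW : ∀ r ∈ Ioi R₀, HasDerivAt W (W' r) r) (hW' : ∀ r ∈ Ioi R₀, κ * r ^ (a - 2) ≤ W' r)
    (hWnonpos : ∀ r ∈ Ioi R₀, W r ≤ 0) :
    ∀ r ∈ Ioi R₀, W r ≤ -(κ / (1 - a)) * r ^ (a - 1) := by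
  have hg : ∀ r ∈ Ioi R₀,
      HasDerivAt (fun x => -(κ / (1 - a)) * x ^ (a - 1)) (κ * r ^ (a - 2)) r := by
    intro r hr
    refine ((Real.hasDerivAt_rpow_const (p := a - 1)
      (Or.inl (hR₀.trans_lt hr).ne')).const_mul (-(κ / (1 - a)))).congr_deriv ?_
    rw [show a - 1 - 1 = a - 2 by ring]
    field_simp [(sub_pos.2 ha).ne']
    ring
  have hmono := monotoneOn_sub_of_hasDerivAt_le (convex_Ioi R₀) hW hg
    (by simpa only [interior_Ioi] using hW')
  have hu : Tendsto (fun r : ℝ => κ / (1 - a) * r ^ (a - 1)) atTop (𝓝 0) := by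
    simpa [neg_sub] using (tendsto_rpow_neg_atTop (sub_pos.2 ha)).const_mul (κ / (1 - a))
  intro r hr
  have := hmono.nonpos_of_le_of_tendsto (fun x hx => by linarith [hWnonpos x hx]) hu r hr
  linarith

section ODE

variable {a R₀ : ℝ} {V : ℝ → ℝ}

theorem deriv_neg_of_strictMonoOn_rpow_mul_deriv (hR₀ : 0 ≤ R₀) (ha : a < 1)
    (hdV : ∀ r ∈ Ioi R₀, HasDerivAt V (deriv V r) r) (hbdd : ∃ M : ℝ, ∀ r ∈ Ioi R₀, V r ≤ M)
    (hW : StrictMonoOn (fun r => r ^ a * deriv V r) (Ioi R₀)) :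
    ∀ r ∈ Ioi R₀, deriv V r < 0 := by
  intro r₁ hr₁
  by_contra! hV₁
  obtain ⟨M, hM⟩ := hbdd
  have hsub : Ici (r₁ + 1) ⊆ Ioi R₀ := fun x hx => hr₁.out.trans_le (by linarith [hx.out])
  set c := (r₁ + 1) ^ a * deriv V (r₁ + 1)
  have hc : 0 < c := (mul_nonneg (Real.rpow_nonneg (hR₀.trans hr₁.out.le) a) hV₁).trans_lt
    (hW hr₁ (hsub self_mem_Ici) (by linarith))
  have hG : ∀ r ∈ Ici (r₁ + 1),
      HasDerivAt (fun x => c / (1 - a) * x ^ (1 - a)) (c * r ^ (-a)) r := by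
    intro r hr
    refine ((Real.hasDerivAt_rpow_const (p := 1 - a)
      (Or.inl (hR₀.trans_lt (hsub hr)).ne')).const_mul (c / (1 - a))).congr_deriv ?_
    rw [show 1 - a - 1 = -a by ring]
    field_simp [(sub_pos.2 ha).ne']
  have hle : ∀ r ∈ Ioi (r₁ + 1), c * r ^ (-a) ≤ deriv V r := by
    intro r hr
    have hr0 : 0 < r := hR₀.trans_lt (hsub hr.out.le)
    rw [Real.rpow_neg hr0.le, ← div_eq_mul_inv, div_le_iff₀ (Real.rpow_pos_of_pos hr0 a)]
    linarith [(hW (hsub self_mem_Ici) (hsub hr.out.le) hr).le]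
  have htop : Tendsto V atTop atTop :=
    tendsto_atTop_of_hasDerivAt_ge (fun r hr => hdV r (hsub hr)) hG hle
      ((tendsto_rpow_atTop (sub_pos.2 ha)).const_mul_atTop (div_pos hc (sub_pos.2 ha)))
  obtain ⟨r, hVr, hr⟩ := ((htop.eventually_gt_atTop M).and (eventually_gt_atTop R₀)).exists
  linarith [hM r hr]

theorem tendsto_nhds_zero_of_rpow_mul_deriv {b : ℝ} {W' : ℝ → ℝ} (hR₀ : 0 ≤ R₀) (ha : a < 1)
    (hb : 0 < b) (hdV : ∀ r ∈ Ioi R₀, HasDerivAt V (deriv V r) r)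
    (hpos : ∀ r ∈ Ioi R₀, 0 < V r) (hneg : ∀ r ∈ Ioi R₀, deriv V r < 0)
    (hW : ∀ r ∈ Ioi R₀, HasDerivAt (fun x => x ^ a * deriv V x) (W' r) r)
    (hW' : ∀ r ∈ Ioi R₀, b * r ^ (a - 2) * V r ≤ W' r) :
    Tendsto V atTop (𝓝 0) := by
  have hanti : AntitoneOn V (Ioi R₀) :=
    antitoneOn_of_hasDerivWithinAt_nonpos (convex_Ioi R₀)
      (fun r hr => (hdV r hr).continuousAt.continuousWithinAt)
      (fun r hr => (hdV r (interior_subset hr)).hasDerivWithinAt)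
      (fun r hr => (hneg r (interior_subset hr)).le)
  refine tendsto_nhds_zero_of_antitoneOn hanti (fun r hr => (hpos r hr).le) fun ε hε => ?_
  by_contra! hge
  set k := b * ε / (1 - a)
  have hWle := le_neg_mul_rpow_of_nonpos (κ := b * ε) hR₀ ha hW
    (fun r hr => by
      have := mul_le_mul_of_nonneg_left (hge r hr)
        (mul_nonneg hb.le (Real.rpow_pos_of_pos (hR₀.trans_lt hr) (a - 2)).le)
      linarith [hW' r hr])
    (fun r hr => mul_nonpos_of_nonneg_of_nonpos
      (Real.rpow_nonneg (hR₀.trans hr.out.le) a) (hneg r hr).le)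
  have hdV_le : ∀ r ∈ Ioi R₀, k * r⁻¹ ≤ -deriv V r := by
    intro r hr
    have hr0 : 0 < r := hR₀.trans_lt hr
    have := hWle r hr
    rw [Real.rpow_sub_one hr0.ne'] at this
    have hra := Real.rpow_pos_of_pos hr0 a
    rw [← mul_le_mul_iff_right₀ hra]
    field_simp at this ⊢
    linarith
  have hsub : Ici (R₀ + 1) ⊆ Ioi R₀ := fun x hx => mem_Ioi.2 (by linarith [mem_Ici.1 hx])
  have htop : Tendsto (fun r => -V r) atTop atTop :=
    tendsto_atTop_of_hasDerivAt_ge (r₀ := R₀ + 1) (fun r hr => (hdV r (hsub hr)).neg)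
      (fun r hr => (Real.hasDerivAt_log (hR₀.trans_lt (hsub hr)).ne').const_mul k)
      (fun r hr => hdV_le r (hsub hr.out.le))
      (Real.tendsto_log_atTop.const_mul_atTop (div_pos (mul_pos hb hε) (sub_pos.2 ha)))
  obtain ⟨r, hVr, hr⟩ := ((htop.eventually_gt_atTop 0).and (eventually_gt_atTop R₀)).exists
  linarith [hpos r hr]

end ODE

theorem stmt16_general (a b R₀ : ℝ) (ha1 : a < 1) (hb : 0 < b) (hR₀ : 0 ≤ R₀)
    (V F : ℝ → ℝ)
    (hV : ContDiffOn ℝ 2 V (Ioi R₀))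
    (hpos : ∀ r ∈ Ioi R₀, 0 < V r)
    (hbdd : ∃ M : ℝ, ∀ r ∈ Ioi R₀, V r ≤ M)
    (hF : ∀ r ∈ Ioi R₀, F r ≤ 0)
    (heq : ∀ r ∈ Ioi R₀,
      r ^ 2 * deriv (deriv V) r + a * r * deriv V r - b * V r + F r = 0) :
    (∀ r ∈ Ioi R₀, deriv V r < 0) ∧ Tendsto V atTop (nhds 0) := by
  have hdV : ∀ r ∈ Ioi R₀, HasDerivAt V (deriv V r) r := fun r hr =>
    ((hV.differentiableOn (by norm_num)).differentiableAt (isOpen_Ioi.mem_nhds hr)).hasDerivAt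
  have hddV : ∀ r ∈ Ioi R₀, HasDerivAt (deriv V) (deriv (deriv V) r) r := fun r hr =>
    (((hV.deriv_of_isOpen isOpen_Ioi (by norm_num)).differentiableOn one_ne_zero).differentiableAt
      (isOpen_Ioi.mem_nhds hr)).hasDerivAt
  have hW : ∀ r ∈ Ioi R₀,
      HasDerivAt (fun x => x ^ a * deriv V x) (r ^ (a - 2) * (b * V r - F r)) r := by
    intro r hr
    convert hasDerivAt_rpow_mul_s16 a (hR₀.trans_lt hr) (hddV r hr) using 2
    linarith [heq r hr]
  have hWmono : StrictMonoOn (fun x => x ^ a * deriv V x) (Ioi R₀) :=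
    strictMonoOn_of_hasDerivWithinAt_pos (convex_Ioi R₀)
      (fun r hr => (hW r hr).continuousAt.continuousWithinAt)
      (fun r hr => (hW r (interior_subset hr)).hasDerivWithinAt)
      (fun r hr => mul_pos (Real.rpow_pos_of_pos (hR₀.trans_lt (interior_subset hr)) _)
        (by nlinarith [hpos r (interior_subset hr), hF r (interior_subset hr)]))
  have hneg := deriv_neg_of_strictMonoOn_rpow_mul_deriv hR₀ ha1 hdV hbdd hWmono
  refine ⟨hneg, tendsto_nhds_zero_of_rpow_mul_deriv hR₀ ha1 hb hdV hpos hneg hW fun r hr => ?_⟩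
  have := Real.rpow_pos_of_pos (hR₀.trans_lt hr) (a - 2)
  nlinarith [hF r hr]

/-- ODE lemma: if `V ∈ C²((R₀,∞))` is positive and bounded and satisfies
`r²V'' + a r V' - b V + F = 0` on `(R₀,∞)` with `a ∈ (0,1)`, `b > 0` and `F ≤ 0`,
then `V' < 0` on `(R₀,∞)` and `V(r) → 0` as `r → ∞`. -/
theorem stmt16 (a b R₀ : ℝ) (ha0 : 0 < a) (ha1 : a < 1) (hb : 0 < b) (hR₀ : 0 ≤ R₀)
    (V F : ℝ → ℝ)
    (hV : ContDiffOn ℝ 2 V (Ioi R₀))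
    (hpos : ∀ r ∈ Ioi R₀, 0 < V r)
    (hbdd : ∃ M : ℝ, ∀ r ∈ Ioi R₀, V r ≤ M)
    (hF : ∀ r ∈ Ioi R₀, F r ≤ 0)
    (heq : ∀ r ∈ Ioi R₀,
      r ^ 2 * deriv (deriv V) r + a * r * deriv V r - b * V r + F r = 0) :
    (∀ r ∈ Ioi R₀, deriv V r < 0) ∧ Tendsto V atTop (nhds 0) :=
  stmt16_general a b R₀ ha1 hb hR₀ V F hV hpos hbdd hF heq
end
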